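/- arXiv:1406.5075 — 5 statements merged into one kernel-verified Lean document; each statement's English description precedes it below -/
import Mathlib

section
/- For every n ≥ 1, the Coxeter group of type A_n — the presented group with generators s_1, …, s_n and relations s_i² = 1, (s_i s_{i+1})³ = 1, and (s_i s_j)² = 1 for |i − j| ≥ 2 (in Lean, the group attached to the Coxeter matrix Aₙ) — is isomorphic to the symmetric group S_{n+1} = Equiv.Perm (Fin (n+1)). -/
/-!
The adjacent transpositions `(i i+1)` satisfy the Coxeter relations of type `Aₙ` and generate
`S_{n+1}`, so they define a surjection from the Coxeter group onto `S_{n+1}`. Conversely, the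
Coxeter relations alone show that every element of `W(A_{n+1})` lies in a right coset
`W(Aₙ) · s_n s_{n-1} ⋯ s_m` (`0 ≤ m ≤ n + 1`) of the parabolic subgroup generated by the first
`n` generators, so by induction `|W(Aₙ)| ≤ (n + 1)!` and the surjection is a bijection.
-/

open Equiv Equiv.Perm Nat

theorem Subgroup.finite_and_card_le_of_forall_eq_mul {G : Type*} [Group G] (H : Subgroup G)
    [Finite H] {k : ℕ} (d : Fin k → G) (hd : ∀ g : G, ∃ h ∈ H, ∃ i, g = h * d i) :
    Finite G ∧ Nat.card G ≤ Nat.card H * k := by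
  have hsurj : Function.Surjective fun p : H × Fin k ↦ (p.1 : G) * d p.2 := by
    intro g
    obtain ⟨h, hh, i, rfl⟩ := hd g
    exact ⟨(⟨h, hh⟩, i), rfl⟩
  refine ⟨Finite.of_surjective _ hsurj, ?_⟩
  simpa using Nat.card_le_card_of_surjective _ hsurj

namespace CoxeterSystem

variable {B W : Type*} [Group W] {M : CoxeterMatrix B} (cs : CoxeterSystem M W)

theorem commute_simple_of_eq_two {i j : B} (h : M i j = 2) :
    Commute (cs.simple i) (cs.simple j) := by
  have := cs.wordProd_braidWord_eq i j
  rw [braidWord, braidWord, M.symmetric j i, h] at this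
  show cs.simple i * cs.simple j = cs.simple j * cs.simple i
  simpa [alternatingWord, wordProd] using this

theorem simple_braid_of_eq_three {i j : B} (h : M i j = 3) :
    cs.simple i * cs.simple j * cs.simple i = cs.simple j * cs.simple i * cs.simple j := by
  have := cs.wordProd_braidWord_eq j i
  rw [braidWord, braidWord, M.symmetric j i, h] at this
  simpa [alternatingWord, wordProd, mul_assoc] using this

end CoxeterSystem

namespace CoxeterMatrix.A

theorem apply {n : ℕ} (i j : Fin n) :
    CoxeterMatrix.A n i j =
      if i = j then 1 else if (j : ℕ) + 1 = i ∨ (i : ℕ) + 1 = j then 3 else 2 := rfl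

theorem isLiftable_swap (n : ℕ) :
    (CoxeterMatrix.A n).IsLiftable fun i : Fin n ↦ swap i.castSucc i.succ := by
  intro i j
  dsimp only
  rw [apply]
  split_ifs with hij hadj
  · simp [hij]
  · obtain h | h := hadj
    · have h3 : IsThreeCycle (swap j.succ i.succ * swap j.succ j.castSucc) :=
        isThreeCycle_swap_mul_swap_same (by grind) (by grind) (by grind)
      rw [show i.castSucc = j.succ by grind, swap_comm j.castSucc, ← h3.orderOf]
      exact pow_orderOf_eq_one _
    · have h3 : IsThreeCycle (swap i.succ i.castSucc * swap i.succ j.succ) :=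
        isThreeCycle_swap_mul_swap_same (by grind) (by grind) (by grind)
      rw [show j.castSucc = i.succ by grind, swap_comm i.castSucc, ← h3.orderOf]
      exact pow_orderOf_eq_one _
  · have hdisj : Disjoint (swap i.castSucc i.succ) (swap j.castSucc j.succ) :=
      disjoint_swap_swap (by grind)
    rw [hdisj.commute.mul_pow]
    simp [sq]

noncomputable def toPerm (n : ℕ) : (CoxeterMatrix.A n).Group →* Perm (Fin (n + 1)) :=
  (CoxeterMatrix.A n).toCoxeterSystem.lift ⟨_, isLiftable_swap n⟩

theorem toPerm_simple (n : ℕ) (i : Fin n) :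
    toPerm n ((CoxeterMatrix.A n).simple i) = swap i.castSucc i.succ :=
  (CoxeterMatrix.A n).toCoxeterSystem.lift_apply_simple (isLiftable_swap n) i

theorem toPerm_surjective (n : ℕ) : Function.Surjective (toPerm n) := by
  rw [← MonoidHom.mrange_eq_top, MonoidHom.mrange_eq_map,
    ← (CoxeterMatrix.A n).toCoxeterSystem.submonoid_closure_range_simple,
    MonoidHom.map_mclosure, ← Set.range_comp, ← mclosure_swap_castSucc_succ n]
  simp only [Function.comp_def, toCoxeterSystem_simple, toPerm_simple]

/-- `s_m`, with the junk value `1` for `m ≥ n`. -/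
def simpleNat (n m : ℕ) : (CoxeterMatrix.A n).Group :=
  if h : m < n then (CoxeterMatrix.A n).simple ⟨m, h⟩ else 1

theorem simpleNat_of_lt {n m : ℕ} (h : m < n) :
    simpleNat n m = (CoxeterMatrix.A n).toCoxeterSystem.simple ⟨m, h⟩ := by
  simp [simpleNat, h]

theorem simpleNat_mul_self (n m : ℕ) : simpleNat n m * simpleNat n m = 1 := by
  by_cases h : m < n
  · rw [simpleNat_of_lt h, CoxeterSystem.simple_mul_simple_self]
  · simp [simpleNat, h]

theorem commute_simpleNat {n i j : ℕ} (h : i + 2 ≤ j) :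
    Commute (simpleNat n i) (simpleNat n j) := by
  by_cases hj : j < n
  · rw [simpleNat_of_lt (by omega : i < n), simpleNat_of_lt hj]
    exact CoxeterSystem.commute_simple_of_eq_two _ (by rw [apply]; grind)
  · simp [simpleNat, hj]

theorem simpleNat_braid {n i : ℕ} (h : i + 1 < n) :
    simpleNat n i * simpleNat n (i + 1) * simpleNat n i =
      simpleNat n (i + 1) * simpleNat n i * simpleNat n (i + 1) := by
  rw [simpleNat_of_lt (by omega : i < n), simpleNat_of_lt h]
  exact CoxeterSystem.simple_braid_of_eq_three _ (by rw [apply]; grind)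

/-- `descProd n m k = s_{m+k-1} ⋯ s_{m+1} s_m`. -/
def descProd (n : ℕ) : ℕ → ℕ → (CoxeterMatrix.A n).Group
  | _, 0 => 1
  | m, k + 1 => descProd n (m + 1) k * simpleNat n m

theorem commute_simpleNat_descProd {n i m : ℕ} (h : i + 2 ≤ m) (k : ℕ) :
    Commute (simpleNat n i) (descProd n m k) := by
  induction k generalizing m with
  | zero => exact Commute.one_right _
  | succ k ih => exact (ih (by omega)).mul_right (commute_simpleNat h)

theorem descProd_mul_simpleNat {n m j k : ℕ} (hm : m ≤ j) (hj : j + 1 < m + k)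
    (hk : m + k ≤ n) :
    descProd n m k * simpleNat n (j + 1) = simpleNat n j * descProd n m k := by
  induction k generalizing m with
  | zero => omega
  | succ k ih =>
    obtain rfl | hmj := eq_or_lt_of_le hm
    · obtain ⟨k, rfl⟩ : ∃ k', k = k' + 1 := ⟨k - 1, by omega⟩
      have hcomm := commute_simpleNat_descProd (n := n) (le_refl (m + 2)) k
      simp only [descProd]
      calc descProd n (m + 2) k * simpleNat n (m + 1) * simpleNat n m * simpleNat n (m + 1)
          = descProd n (m + 2) k * (simpleNat n m * simpleNat n (m + 1) * simpleNat n m) := by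
            rw [simpleNat_braid (by omega)]; simp only [mul_assoc]
        _ = simpleNat n m * (descProd n (m + 2) k * simpleNat n (m + 1) * simpleNat n m) := by
            simp only [← mul_assoc]; rw [← hcomm.eq]
    · simp only [descProd]
      rw [mul_assoc, (commute_simpleNat (by omega : m + 2 ≤ j + 1)).eq, ← mul_assoc,
        ih (by omega) (by omega) (by omega), mul_assoc]

/-- `s_{n-1} ⋯ s_m`: for `m ≤ n` these represent the right cosets of the parabolic subgroup
generated by `s_0, …, s_{n-2}`. -/
def cosetRep (n m : ℕ) : (CoxeterMatrix.A n).Group := descProd n m (n - m)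

theorem cosetRep_eq_mul {n m : ℕ} (h : m < n) :
    cosetRep n m = cosetRep n (m + 1) * simpleNat n m := by
  rw [cosetRep, show n - m = n - (m + 1) + 1 by omega]
  rfl

theorem isLiftable_castSucc (n : ℕ) :
    (CoxeterMatrix.A n).IsLiftable
      fun i : Fin n ↦ (CoxeterMatrix.A (n + 1)).simple i.castSucc := by
  intro i j
  have : CoxeterMatrix.A (n + 1) i.castSucc j.castSucc = CoxeterMatrix.A n i j := by
    simp [apply]
  rw [← this]
  exact (CoxeterMatrix.A (n + 1)).toCoxeterSystem.simple_mul_simple_pow _ _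

noncomputable def castSuccHom (n : ℕ) :
    (CoxeterMatrix.A n).Group →* (CoxeterMatrix.A (n + 1)).Group :=
  (CoxeterMatrix.A n).toCoxeterSystem.lift ⟨_, isLiftable_castSucc n⟩

theorem simpleNat_mem_range_castSuccHom {n j : ℕ} (h : j < n) :
    simpleNat (n + 1) j ∈ (castSuccHom n).range :=
  ⟨(CoxeterMatrix.A n).simple ⟨j, h⟩, by
    rw [simpleNat_of_lt (by omega)]
    exact (CoxeterMatrix.A n).toCoxeterSystem.lift_apply_simple (isLiftable_castSucc n) _⟩

theorem exists_mem_range_castSuccHom_mul_cosetRep {n : ℕ}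
    (g : (CoxeterMatrix.A (n + 1)).Group) :
    ∃ h ∈ (castSuccHom n).range, ∃ m ≤ n + 1, g = h * cosetRep (n + 1) m := by
  induction g using (CoxeterMatrix.A (n + 1)).toCoxeterSystem.simple_induction_right with
  | one => exact ⟨1, one_mem _, n + 1, le_rfl, by simp [cosetRep, descProd]⟩
  | mul_simple_right w i ih =>
    obtain ⟨h, hh, m, hm, rfl⟩ := ih
    obtain ⟨j, hj⟩ := i
    rw [← simpleNat_of_lt hj, mul_assoc]
    obtain hjm | rfl | rfl | hmj : j + 2 ≤ m ∨ j + 1 = m ∨ j = m ∨ m < j := by omega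
    · rw [cosetRep, ← (commute_simpleNat_descProd hjm _).eq, ← mul_assoc]
      exact ⟨_, mul_mem hh (simpleNat_mem_range_castSuccHom (by omega)), m, hm, rfl⟩
    · exact ⟨h, hh, j, by omega, by rw [cosetRep_eq_mul hj]⟩
    · rw [cosetRep_eq_mul hj, mul_assoc, simpleNat_mul_self, mul_one]
      exact ⟨h, hh, j + 1, hj, rfl⟩
    · obtain ⟨j, rfl⟩ : ∃ j', j = j' + 1 := ⟨j - 1, by omega⟩
      rw [cosetRep, descProd_mul_simpleNat (by omega) (by omega) (by omega), ← mul_assoc]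
      exact ⟨_, mul_mem hh (simpleNat_mem_range_castSuccHom (by omega)), m, hm, rfl⟩

theorem finite_and_card_le_factorial :
    ∀ n : ℕ, Finite (CoxeterMatrix.A n).Group ∧ Nat.card (CoxeterMatrix.A n).Group ≤ (n + 1)!
  | 0 => by
    have : Subsingleton (CoxeterMatrix.A 0).Group := subsingleton_of_forall_eq 1 fun w ↦
      (CoxeterMatrix.A 0).toCoxeterSystem.simple_induction_left (p := (· = 1)) w rfl
        fun _ i ↦ i.elim0
    exact ⟨inferInstance, Finite.card_le_one_iff_subsingleton.mpr this⟩
  | n + 1 => by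
    obtain ⟨_, hcard⟩ := finite_and_card_le_factorial n
    have hsurj := (castSuccHom n).rangeRestrict_surjective
    have : Finite (castSuccHom n).range := Finite.of_surjective _ hsurj
    have hrange : Nat.card (castSuccHom n).range ≤ (n + 1)! :=
      (Nat.card_le_card_of_surjective _ hsurj).trans hcard
    obtain ⟨hfin, hle⟩ := (castSuccHom n).range.finite_and_card_le_of_forall_eq_mul
      (fun m : Fin (n + 2) ↦ cosetRep (n + 1) m) fun g ↦ by
        obtain ⟨h, hh, m, hm, rfl⟩ := exists_mem_range_castSuccHom_mul_cosetRep g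
        exact ⟨h, hh, ⟨m, by omega⟩, rfl⟩
    refine ⟨hfin, hle.trans ?_⟩
    rw [factorial_succ (n + 1), mul_comm (n + 2)]
    exact Nat.mul_le_mul_right _ hrange

end CoxeterMatrix.A

theorem coxeterGroup_Aₙ_iso_symmetricGroup_general (n : ℕ) :
    Nonempty ((CoxeterMatrix.Aₙ n).Group ≃* Equiv.Perm (Fin (n + 1))) := by
  obtain ⟨_, hcard⟩ := CoxeterMatrix.A.finite_and_card_le_factorial n
  refine ⟨MulEquiv.ofBijective (CoxeterMatrix.A.toPerm n)
    ((CoxeterMatrix.A.toPerm_surjective n).bijective_of_nat_card_le ?_)⟩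
  rwa [Nat.card_perm, Nat.card_fin]

/-- The Coxeter group of type `Aₙ` (the group presented by generators `s₁, …, sₙ` and
relations `sᵢ² = 1`, `(sᵢsᵢ₊₁)³ = 1` and `(sᵢsⱼ)² = 1` for `|i - j| ≥ 2`) is isomorphic
to the symmetric group `S_{n+1}`. -/
theorem coxeterGroup_Aₙ_iso_symmetricGroup (n : ℕ) (hn : 1 ≤ n) :
    Nonempty ((CoxeterMatrix.Aₙ n).Group ≃* Equiv.Perm (Fin (n + 1))) :=
  coxeterGroup_Aₙ_iso_symmetricGroup_general n
end

section
/- (Bruhat decomposition.) Let G be a group with subgroups B and N, set H := B ⊓ N, and let S be a set of elements of N such that: (1) B and N together generate G (Subgroup.closure (↑B ∪ ↑N) = ⊤); (2) s·s ∈ H for every s ∈ S; (3) N is generated by S together with H (N ≤ Subgroup.closure (S ∪ ↑H)); and (4) for every s ∈ S, every n ∈ N and every b ∈ B, the element s·b·n lies in B·{n}·B ∪ B·{s·n}·B (i.e. there exist b₁, b₂ ∈ B with s·b·n = b₁·n·b₂ or s·b·n = b₁·(s·n)·b₂). Then G = B·N·B: every g ∈ G can be written as g = b₁·n·b₂ with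 b₁, b₂ ∈ B and n ∈ N. -/
/-- Bruhat decomposition. Let `G` be a group with subgroups `B` and `N`, let
`H := B ⊓ N`, and let `S` be a set of elements of `N` such that `B` and `N` generate
`G`, the elements of `S` square into `H`, `N` is generated by `S` together with `H`,
and for all `s ∈ S`, `n ∈ N`, `b ∈ B` the element `s·b·n` lies in
`B·{n}·B ∪ B·{s·n}·B`. Then `G = B·N·B`. -/
theorem bruhat_decomposition {G : Type*} [Group G] (B N : Subgroup G) (S : Set G)
    (hSN : S ⊆ N)
    (hgen : Subgroup.closure ((B : Set G) ∪ (N : Set G)) = ⊤)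
    (hS2 : ∀ s ∈ S, s * s ∈ B ⊓ N)
    (hNgen : (N : Set G) ⊆ (Subgroup.closure (S ∪ ((B ⊓ N : Subgroup G) : Set G)) : Set G))
    (hax : ∀ s ∈ S, ∀ n ∈ N, ∀ b ∈ B, ∃ b₁ ∈ B, ∃ b₂ ∈ B,
      s * b * n = b₁ * n * b₂ ∨ s * b * n = b₁ * (s * n) * b₂) :
    ∀ g : G, ∃ b₁ ∈ B, ∃ n ∈ N, ∃ b₂ ∈ B, g = b₁ * n * b₂ := by
  -- the key property: left multiplication by `n` preserves `B·N·B` in a strong sense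
  have key : ∀ n ∈ Subgroup.closure (S ∪ ((B ⊓ N : Subgroup G) : Set G)),
      ∀ b ∈ B, ∀ m ∈ N, ∃ b₁ ∈ B, ∃ k ∈ N, ∃ b₂ ∈ B, n * b * m = b₁ * k * b₂ := by
    intro n hn
    induction hn using Subgroup.closure_induction_left with
    | one =>
      intro b hb m hm
      exact ⟨b, hb, m, hm, 1, one_mem _, by group⟩
    | mul_left x hx y _ ih =>
      intro b hb m hm
      obtain ⟨b₁, hb₁, k, hk, b₂, hb₂, heq⟩ := ih b hb m hm
      rcases hx with hx | hx
      · -- x ∈ S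
        obtain ⟨c₁, hc₁, c₂, hc₂, h | h⟩ := hax x hx k hk b₁ hb₁
        · exact ⟨c₁, hc₁, k, hk, c₂ * b₂, mul_mem hc₂ hb₂, by
            rw [show x * y * b * m = x * (y * b * m) by group, heq,
              show x * (b₁ * k * b₂) = x * b₁ * k * b₂ by group, h]; group⟩
        · exact ⟨c₁, hc₁, x * k, mul_mem (hSN hx) hk, c₂ * b₂, mul_mem hc₂ hb₂, by
            rw [show x * y * b * m = x * (y * b * m) by group, heq,
              show x * (b₁ * k * b₂) = x * b₁ * k * b₂ by group, h]; group⟩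
      · -- x ∈ H ≤ B
        exact ⟨x * b₁, mul_mem hx.1 hb₁, k, hk, b₂, hb₂, by
          rw [show x * y * b * m = x * (y * b * m) by group, heq]; group⟩
    | inv_mul_cancel x hx y _ ih =>
      intro b hb m hm
      obtain ⟨b₁, hb₁, k, hk, b₂, hb₂, heq⟩ := ih b hb m hm
      rcases hx with hx | hx
      · -- x ∈ S, use x⁻¹ = (x*x)⁻¹ * x
        obtain ⟨c₁, hc₁, c₂, hc₂, h | h⟩ := hax x hx k hk b₁ hb₁
        · refine ⟨(x * x)⁻¹ * c₁, mul_mem (inv_mem (hS2 x hx).1) hc₁, k, hk,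
            c₂ * b₂, mul_mem hc₂ hb₂, ?_⟩
          rw [show x⁻¹ * y * b * m = (x * x)⁻¹ * (x * (y * b * m)) by group, heq,
            show (x * x)⁻¹ * (x * (b₁ * k * b₂)) = (x * x)⁻¹ * (x * b₁ * k) * b₂ by group, h]
          group
        · refine ⟨(x * x)⁻¹ * c₁, mul_mem (inv_mem (hS2 x hx).1) hc₁, x * k,
            mul_mem (hSN hx) hk, c₂ * b₂, mul_mem hc₂ hb₂, ?_⟩
          rw [show x⁻¹ * y * b * m = (x * x)⁻¹ * (x * (y * b * m)) by group, heq,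
            show (x * x)⁻¹ * (x * (b₁ * k * b₂)) = (x * x)⁻¹ * (x * b₁ * k) * b₂ by group, h]
          group
      · -- x ∈ H ≤ B
        exact ⟨x⁻¹ * b₁, mul_mem (inv_mem hx.1) hb₁, k, hk, b₂, hb₂, by
          rw [show x⁻¹ * y * b * m = x⁻¹ * (y * b * m) by group, heq]; group⟩
  -- now show that B·N·B is all of G
  intro g
  have hg : g ∈ Subgroup.closure ((B : Set G) ∪ (N : Set G)) := by
    rw [hgen]; trivial
  induction hg using Subgroup.closure_induction with
  | mem x hx =>
    rcases hx with hx | hx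
    · exact ⟨x, hx, 1, one_mem _, 1, one_mem _, by group⟩
    · exact ⟨1, one_mem _, x, hx, 1, one_mem _, by group⟩
  | one => exact ⟨1, one_mem _, 1, one_mem _, 1, one_mem _, by group⟩
  | mul x y _ _ ihx ihy =>
    obtain ⟨b₁, hb₁, n, hn, b₂, hb₂, rfl⟩ := ihx
    obtain ⟨c₁, hc₁, m, hm, c₂, hc₂, rfl⟩ := ihy
    obtain ⟨d₁, hd₁, k, hk, d₂, hd₂, heq⟩ := key n (hNgen hn) (b₂ * c₁) (mul_mem hb₂ hc₁) m hm
    exact ⟨b₁ * d₁, mul_mem hb₁ hd₁, k, hk, d₂ * c₂, mul_mem hd₂ hc₂, by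
      have : b₁ * n * b₂ * (c₁ * m * c₂) = b₁ * (n * (b₂ * c₁) * m) * c₂ := by group
      rw [this, heq]; group⟩
  | inv x _ ihx =>
    obtain ⟨b₁, hb₁, n, hn, b₂, hb₂, rfl⟩ := ihx
    exact ⟨b₂⁻¹, inv_mem hb₂, n⁻¹, inv_mem hn, b₁⁻¹, inv_mem hb₁, by group⟩
end

section
/- Let K be a field, μ ∈ K with μ ≠ 0, and n ≥ 1. For each index i with i + 1 < n let M_i be the n×n matrix over K whose (j,j) entry is 1 for j ∉ {i, i+1}, whose (i, i+1) entry is μ, whose (i+1, i) entry is μ⁻¹, and all of whose other entries are 0. Then each M_i squares to the identity (so is a unit of the matrix ring), and the subgroup of units of the n×n matrix ring generated by the M_i is isomorphic, as a group, to the symmetric group Equiv.Perm (Fin n). -/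
/-!
Let `D = diag(μ^j)`. Conjugating the permutation matrix of `σ` by `D` gives the monomial matrix
with entry `μ^(k-j)` at each position `(j, k)` with `σ k = j`; for the adjacent transposition
`(i i+1)` this is exactly `Mᵢ`. So `σ ↦ D⁻¹ P_σ D` is an injective homomorphism `Sₙ → GLₙ(K)`
sending the adjacent transpositions, which generate `Sₙ`, to the `Mᵢ`; the `Mᵢ` therefore
generate its image, a copy of `Sₙ`.
-/

/-- The `n×n` monomial matrix over `K` which is the identity except for the `2×2` block
`[[0, μ], [μ⁻¹, 0]]` in rows and columns `i`, `i+1`; the image of the braid group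
generator `σᵢ` under the `F₁ᵐ`-linear representation of the braid group. -/
def braidMatrix (K : Type*) [Field K] (n : ℕ) (μ : K) (i : ℕ) :
    Matrix (Fin n) (Fin n) K :=
  Matrix.of fun j k =>
    if (j : ℕ) = i ∧ (k : ℕ) = i + 1 then μ
    else if (j : ℕ) = i + 1 ∧ (k : ℕ) = i then μ⁻¹
    else if j = k ∧ (j : ℕ) ≠ i ∧ (j : ℕ) ≠ i + 1 then 1
    else 0

open Equiv

namespace Matrix

variable {ι R : Type*} [Fintype ι] [DecidableEq ι] [Semiring R]

def diagonalUnit (d : ι → Rˣ) : (Matrix ι ι R)ˣ where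
  val := diagonal fun j => d j
  inv := diagonal fun j => ↑(d j)⁻¹
  val_inv := by simp [diagonal_mul_diagonal]
  inv_val := by simp [diagonal_mul_diagonal]

def permMatrixUnitsHom : Perm ι →* (Matrix ι ι R)ˣ :=
  (permMatrixHom : Perm ι →* Matrix ι ι R).toHomUnits

theorem permMatrixUnitsHom_injective [Nontrivial R] :
    Function.Injective (permMatrixUnitsHom : Perm ι →* (Matrix ι ι R)ˣ) := by
  intro σ τ h
  have hP : σ⁻¹.toPEquiv = τ⁻¹.toPEquiv :=
    PEquiv.toMatrix_injective (α := R) (congrArg Units.val h)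
  refine inv_injective (Equiv.ext fun x => ?_)
  simpa [Equiv.toPEquiv_apply] using congrArg (fun f : ι ≃. ι => f x) hP

def diagonalConjPermHom (d : ι → Rˣ) : Perm ι →* (Matrix ι ι R)ˣ :=
  (MulAut.conj (diagonalUnit d)⁻¹).toMonoidHom.comp permMatrixUnitsHom

theorem diagonalConjPermHom_injective [Nontrivial R] (d : ι → Rˣ) :
    Function.Injective (diagonalConjPermHom d) :=
  (MulAut.conj _).injective.comp permMatrixUnitsHom_injective

theorem diagonalConjPermHom_apply_apply (d : ι → Rˣ) (σ : Perm ι) (j k : ι) :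
    (diagonalConjPermHom d σ : Matrix ι ι R) j k =
      if σ k = j then (↑(d j)⁻¹ * d k : R) else 0 := by
  simp [diagonalConjPermHom, permMatrixUnitsHom, diagonalUnit, PEquiv.toMatrix_apply,
    Equiv.toPEquiv_apply, Equiv.symm_apply_eq, @eq_comm _ j]

end Matrix

open Matrix

theorem braidMatrix_eq_diagonalConjPermHom_swap {K : Type*} [Field K] {n : ℕ} (u : Kˣ)
    {a b : Fin n} (hab : (b : ℕ) = a + 1) :
    braidMatrix K n u a = diagonalConjPermHom (fun j : Fin n => u ^ (j : ℕ)) (swap a b) := by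
  ext j k
  have hpow : (↑(u ^ (j : ℕ))⁻¹ * ↑(u ^ (k : ℕ)) : K) = ↑(u ^ ((k : ℤ) - j)) := by
    rw [_root_.zpow_sub, zpow_natCast, zpow_natCast, mul_comm, Units.val_mul]
  rw [diagonalConjPermHom_apply_apply, hpow]
  simp only [braidMatrix, of_apply, swap_apply_def, Fin.ext_iff]
  split_ifs <;> first
    | rfl
    | omega
    | simp [show (k : ℤ) - j = 1 by omega]
    | simp [show (k : ℤ) - j = -1 by omega]
    | simp [show (k : ℤ) - j = 0 by omega]

theorem braidMatrix_mul_self {K : Type*} [Field K] {n : ℕ} (u : Kˣ) {i : ℕ} (hi : i + 1 < n) :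
    braidMatrix K n u i * braidMatrix K n u i = 1 := by
  rw [braidMatrix_eq_diagonalConjPermHom_swap u (a := ⟨i, by omega⟩) (b := ⟨i + 1, hi⟩) rfl,
    ← Units.val_mul, ← map_mul, Equiv.swap_mul_self, map_one, Units.val_one]

theorem setOf_braidMatrix_eq_image_adjacent_swaps {K : Type*} [Field K] (u : Kˣ) (m : ℕ) :
    {g : (Matrix (Fin (m + 1)) (Fin (m + 1)) K)ˣ |
        ∃ i : ℕ, ∃ _ : i + 1 < m + 1, (g : Matrix _ _ K) = braidMatrix K (m + 1) u i} =
      diagonalConjPermHom (fun j : Fin (m + 1) => u ^ (j : ℕ)) ''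
        Set.range fun i : Fin m => swap i.castSucc i.succ := by
  ext g
  constructor
  · rintro ⟨i, hi, hg⟩
    refine ⟨_, ⟨⟨i, by omega⟩, rfl⟩, Units.ext ?_⟩
    rw [hg]
    exact (braidMatrix_eq_diagonalConjPermHom_swap u (a := Fin.castSucc ⟨i, by omega⟩) rfl).symm
  · rintro ⟨_, ⟨i, rfl⟩, rfl⟩
    exact ⟨i, by omega, (braidMatrix_eq_diagonalConjPermHom_swap u rfl).symm⟩

theorem closure_braidMatrix_units_eq_range {K : Type*} [Field K] (u : Kˣ) (m : ℕ) :
    Subgroup.closure {g : (Matrix (Fin (m + 1)) (Fin (m + 1)) K)ˣ |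
        ∃ i : ℕ, ∃ _ : i + 1 < m + 1, (g : Matrix _ _ K) = braidMatrix K (m + 1) u i} =
      (diagonalConjPermHom (fun j : Fin (m + 1) => u ^ (j : ℕ))).range := by
  rw [setOf_braidMatrix_eq_image_adjacent_swaps, ← MonoidHom.map_closure,
    Subgroup.closure_eq_top_of_mclosure_eq_top (Perm.mclosure_swap_castSucc_succ m),
    ← MonoidHom.range_eq_map]

/-- Each matrix `Mᵢ = braidMatrix K n μ i` squares to the identity (so is a unit of
the matrix ring), and the subgroup of units of the matrix ring generated by the `Mᵢ`
is isomorphic to the symmetric group `Sₙ`. -/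
theorem braidMatrix_generate_symmetricGroup (K : Type*) [Field K] (n : ℕ) (hn : 1 ≤ n)
    (μ : K) (hμ : μ ≠ 0) :
    (∀ i : ℕ, i + 1 < n →
      braidMatrix K n μ i * braidMatrix K n μ i = 1) ∧
    Nonempty
      ((Subgroup.closure {u : (Matrix (Fin n) (Fin n) K)ˣ |
          ∃ i : ℕ, ∃ _ : i + 1 < n, (u : Matrix (Fin n) (Fin n) K) = braidMatrix K n μ i})
        ≃* Equiv.Perm (Fin n)) := by
  obtain ⟨m, rfl⟩ : ∃ m, n = m + 1 := ⟨n - 1, by omega⟩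
  obtain ⟨u, rfl⟩ : ∃ u : Kˣ, (u : K) = μ := ⟨Units.mk0 μ hμ, rfl⟩
  refine ⟨fun i hi => braidMatrix_mul_self u hi, ?_⟩
  rw [closure_braidMatrix_units_eq_range u]
  exact ⟨(MonoidHom.ofInjective (diagonalConjPermHom_injective _)).symm⟩
end

section
/- Let F be a finite field with an odd number of elements, and let a ∈ F with a ≠ 0. Then the sign of the permutation of F given by multiplication by a (the permutation Equiv.mulLeft₀ a) equals 1 if a is a square in F and −1 otherwise: Equiv.Perm.sign (Equiv.mulLeft₀ a ha) = if IsSquare a then 1 else −1. -/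
/-!
A cyclic group has at most one nontrivial homomorphism to `ℤˣ = {±1}`, since such a
homomorphism must send a generator to `-1`. Both `u ↦ sign (x ↦ u * x)` and the quadratic
character are homomorphisms `Fˣ → ℤˣ`. The quadratic character is nontrivial in odd
characteristic, and so is the sign: multiplication by a generator `g` of `Fˣ` cyclically
permutes the `q - 1` nonzero elements `g ^ k`, a cycle of even length.
-/

open Equiv Subgroup

theorem IsCyclic.monoidHom_intUnits_eq_of_ne_one {G : Type*} [Group G] [IsCyclic G]
    {φ ψ : G →* ℤˣ} (hφ : φ ≠ 1) (hψ : ψ ≠ 1) : φ = ψ := by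
  obtain ⟨g, hg⟩ := IsCyclic.exists_generator (α := G)
  have map_generator : ∀ χ : G →* ℤˣ, χ ≠ 1 → χ g = -1 := by
    intro χ hχ
    refine (Int.units_eq_one_or _).resolve_left fun h ↦ hχ ?_
    ext x
    obtain ⟨k, rfl⟩ := mem_zpowers_iff.mp (hg x)
    simp [h]
  ext x
  obtain ⟨k, rfl⟩ := mem_zpowers_iff.mp (hg x)
  simp [map_generator φ hφ, map_generator ψ hψ]

section GroupWithZero

variable {G₀ : Type*} [GroupWithZero G₀]

theorem Units.smul_eq_self_iff_eq_zero {g : G₀ˣ} (hg : g ≠ 1) {x : G₀} :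
    g • x = x ↔ x = 0 := by
  refine ⟨fun h ↦ ?_, fun h ↦ by simp [h]⟩
  by_contra hx
  exact hg (Units.ext (by simpa [Units.smul_def, hx] using h))

theorem MulAction.isCycle_toPerm_of_mem_zpowers {g : G₀ˣ} (hg : ∀ x, x ∈ zpowers g)
    (hg1 : g ≠ 1) : (MulAction.toPerm g : Perm G₀).IsCycle := by
  refine ⟨1, by simp [Units.smul_eq_self_iff_eq_zero hg1], fun y hy ↦ ?_⟩
  have hy0 : y ≠ 0 := by simpa [Units.smul_eq_self_iff_eq_zero hg1] using hy
  obtain ⟨k, hk⟩ := mem_zpowers_iff.mp (hg (Units.mk0 y hy0))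
  refine ⟨k, ?_⟩
  rw [← MulAction.toPermHom_apply, ← map_zpow]
  simp [Units.smul_def, hk]

variable [Fintype G₀] [DecidableEq G₀]

theorem MulAction.support_toPerm_units {g : G₀ˣ} (hg : g ≠ 1) :
    (MulAction.toPerm g : Perm G₀).support = {0}ᶜ := by
  ext x
  simp [Perm.mem_support, Units.smul_eq_self_iff_eq_zero hg]

theorem MulAction.sign_toPerm_of_mem_zpowers {g : G₀ˣ} (hg : ∀ x, x ∈ zpowers g)
    (hg1 : g ≠ 1) :
    Perm.sign (MulAction.toPerm g : Perm G₀) = -(-1) ^ (Fintype.card G₀ - 1) := by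
  rw [(isCycle_toPerm_of_mem_zpowers hg hg1).sign, support_toPerm_units hg1,
    Finset.card_compl, Finset.card_singleton]

theorem MulAction.sign_comp_toPermHom_units_ne_one [IsCyclic G₀ˣ]
    (hodd : Odd (Fintype.card G₀)) :
    Perm.sign.comp (MulAction.toPermHom G₀ˣ G₀) ≠ 1 := by
  obtain ⟨g, hg⟩ := IsCyclic.exists_generator (α := G₀ˣ)
  have hg1 : g ≠ 1 := by
    rintro rfl
    have h := orderOf_eq_card_of_forall_mem_zpowers hg
    rw [orderOf_one, Nat.card_eq_fintype_card, Fintype.card_units] at h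
    obtain ⟨m, hm⟩ := hodd
    omega
  intro h
  have := DFunLike.congr_fun h g
  simp [MulAction.sign_toPerm_of_mem_zpowers hg hg1,
    (Nat.Odd.sub_odd hodd odd_one).neg_one_pow] at this

end GroupWithZero

theorem quadraticChar_toUnitHom_ne_one {F : Type*} [Field F] [Fintype F] [DecidableEq F]
    (hF : ringChar F ≠ 2) : (quadraticChar F).toUnitHom ≠ 1 := by
  obtain ⟨a, ha⟩ := quadraticChar_exists_neg_one hF
  have ha0 : a ≠ 0 := by rintro rfl; simp at ha
  intro h
  have := congrArg Units.val (DFunLike.congr_fun h (Units.mk0 a ha0))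
  simp [ha] at this

open Classical

/-- Gauss's lemma over a finite field of odd order: the sign of the permutation of `F`
given by multiplication by a nonzero `a` equals `1` if `a` is a square and `-1`
otherwise (the quadratic residue symbol of `a`). -/
theorem sign_mulLeft_eq_quadratic_residue (F : Type*) [Field F] [Fintype F]
    [DecidableEq F] (hodd : Odd (Fintype.card F)) (a : F) (ha : a ≠ 0) :
    Equiv.Perm.sign (Equiv.mulLeft₀ a ha) = if IsSquare a then 1 else -1 := by
  have hF : ringChar F ≠ 2 := fun h ↦
    Nat.not_even_iff_odd.mpr hodd (Nat.even_iff.mpr (FiniteField.even_card_of_char_two h))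
  have h := IsCyclic.monoidHom_intUnits_eq_of_ne_one
    (MulAction.sign_comp_toPermHom_units_ne_one hodd) (quadraticChar_toUnitHom_ne_one hF)
  refine (DFunLike.congr_fun h (Units.mk0 a ha)).trans (Units.ext ?_)
  simp [quadraticChar_apply, quadraticCharFun, ha, apply_ite Units.val]
end

section
/- Let F be a finite field with q = Fintype.card F elements, let n ≥ 1 divide q − 1, and let H be the kernel of the n-th power homomorphism on the unit group Fˣ (so H is the group μ_n of n-th roots of unity in F). Let Q = Fˣ ⧸ H and let s : Q → Fˣ be a section of the quotient map (∀ c, the class of s c equals c). Then for every a ∈ Fˣ, the product over all c ∈ Q of the 'monomial entries' (a · s c) · (s (class of (a · s c)))⁻¹ — each of which lies in H — equals the n-th power residue symbol a^{(q−1)/n}: ∏_{c : Q} (a · s c) · (s (↑(a · s c)))⁻¹ = a ^ ((q − 1) / n). -/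
/-!
Multiplication by `a` permutes the cosets `c ↦ ā c`, so in the product of the entries
`a · s c · s (ā c)⁻¹` the section values cancel and only `a ^ [G : H]` survives. For
`G = Fˣ` cyclic of order `q - 1` and `H = μ_n` with `n ∣ q - 1`, the index is `(q - 1) / n`.
-/

namespace QuotientGroup

variable {G : Type*} [CommGroup G] {H : Subgroup G} {s : G ⧸ H → G}

theorem mul_section_mul_inv_mem (hs : ∀ c, (s c : G ⧸ H) = c) (a : G) (c : G ⧸ H) :
    a * s c * (s (a * s c : G))⁻¹ ∈ H := by
  rw [← eq_one_iff]
  simp [hs]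

theorem finprod_mul_section_mul_inv_eq_pow_index [Finite (G ⧸ H)]
    (hs : ∀ c, (s c : G ⧸ H) = c) (a : G) :
    ∏ᶠ c : G ⧸ H, a * s c * (s (a * s c : G))⁻¹ = a ^ H.index := by
  have := Fintype.ofFinite (G ⧸ H)
  calc ∏ᶠ c : G ⧸ H, a * s c * (s (a * s c : G))⁻¹
      = ∏ c : G ⧸ H, a * s c * (s (a * c))⁻¹ := by
        simp only [finprod_eq_prod_of_fintype, mk_mul, hs]
    _ = a ^ Fintype.card (G ⧸ H) * (∏ c, s c) * (∏ c, s (a * c))⁻¹ := by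
        rw [Finset.prod_mul_distrib, Finset.prod_mul_distrib, Finset.prod_const,
          Finset.prod_inv_distrib, Finset.card_univ]
    _ = a ^ H.index := by
        rw [Fintype.prod_equiv (Equiv.mulLeft (a : G ⧸ H)) (fun c ↦ s (a * c)) s fun _ ↦ rfl,
          mul_inv_cancel_right, Subgroup.index, Nat.card_eq_fintype_card]

end QuotientGroup

theorem power_residue_symbol_eq_det_general (F : Type*) [Field F] [Fintype F] (n : ℕ)
    (hdvd : n ∣ Fintype.card F - 1)
    (H : Subgroup Fˣ) (hH : H = (powMonoidHom n : Fˣ →* Fˣ).ker)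
    (s : Fˣ ⧸ H → Fˣ) (hs : ∀ c : Fˣ ⧸ H, (QuotientGroup.mk (s c) : Fˣ ⧸ H) = c)
    (a : Fˣ) :
    (∀ c : Fˣ ⧸ H, (a * s c) * (s (QuotientGroup.mk (a * s c)))⁻¹ ∈ H) ∧
    ∏ᶠ c : Fˣ ⧸ H, (a * s c) * (s (QuotientGroup.mk (a * s c)))⁻¹
      = a ^ ((Fintype.card F - 1) / n) := by
  refine ⟨QuotientGroup.mul_section_mul_inv_mem hs a, ?_⟩
  have hindex : H.index = (Fintype.card F - 1) / n := by
    rw [hH, IsCyclic.index_powMonoidHom_ker, Nat.card_units, Nat.card_eq_fintype_card,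
      Nat.gcd_eq_right hdvd]
  rw [QuotientGroup.finprod_mul_section_mul_inv_eq_pow_index hs, hindex]

/-- The power residue symbol equals the determinant: let `F` be a finite field with
`q` elements, `n ∣ q - 1`, and `H = μ_n` the kernel of the `n`-th power map on `Fˣ`.
Pick a section `s` of `Fˣ → Fˣ ⧸ H` (a basis of `F` as an `F₁ⁿ`-vector space). For
`a ∈ Fˣ`, multiplication by `a` sends the basis vector `s c` to `a · s c`, whose
monomial entry `(a · s c) · (s (class of (a · s c)))⁻¹` lies in `H = μ_n`; the
product of these entries (the determinant of multiplication by `a`) equals the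
`n`-th power residue symbol `a^{(q-1)/n}`. -/
theorem power_residue_symbol_eq_det (F : Type*) [Field F] [Fintype F] (n : ℕ)
    (hn : 1 ≤ n) (hdvd : n ∣ Fintype.card F - 1)
    (H : Subgroup Fˣ) (hH : H = (powMonoidHom n : Fˣ →* Fˣ).ker)
    (s : Fˣ ⧸ H → Fˣ) (hs : ∀ c : Fˣ ⧸ H, (QuotientGroup.mk (s c) : Fˣ ⧸ H) = c)
    (a : Fˣ) :
    (∀ c : Fˣ ⧸ H, (a * s c) * (s (QuotientGroup.mk (a * s c)))⁻¹ ∈ H) ∧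
    ∏ᶠ c : Fˣ ⧸ H, (a * s c) * (s (QuotientGroup.mk (a * s c)))⁻¹
      = a ^ ((Fintype.card F - 1) / n) :=
  power_residue_symbol_eq_det_general F n hdvd H hH s hs a
end
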